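/- The number λ_{n+4} of self-dual monotone Boolean functions on n+4 variables equals Σ_{a,b,c ∈ D_n} Σ_{h ∈ D_n, h ≥ a|b|c|a*|b*|c*} re[a|b|c, h] · re[a|b*|c*, h] · re[b|a*|c*, h] · re[c|a*|b*, h], where re[x,y] = |{z ∈ D_n : x ≤ z ≤ y}|. -/

import Mathlib

abbrev BF (n : ℕ) := (Fin n → Bool) → Bool

def dual {n : ℕ} (f : BF n) : BF n := fun v => ! f (fun i => ! v i)

def SelfDual {n : ℕ} (f : BF n) : Prop := f = dual f

open Classical in
/-- The number of self-dual monotone Boolean functions on `m` variables. -/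
noncomputable def lambda (m : ℕ) : ℕ :=
  (Finset.univ.filter fun x : BF m => Monotone x ∧ SelfDual x).card

open Classical in
/-- `D n` as a finset: all monotone Boolean functions on `n` variables. -/
noncomputable def Dset (n : ℕ) : Finset (BF n) :=
  Finset.univ.filter fun f => Monotone f

open Classical in
/-- `re x y = |{z ∈ D_n : x ≤ z ≤ y}|`. -/
noncomputable def re {n : ℕ} (x y : BF n) : ℕ :=
  (Finset.univ.filter fun z : BF n => Monotone z ∧ x ≤ z ∧ z ≤ y).card

/-!
Splitting off the last four variables, a monotone self-dual function on `n + 4` variables is the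
same as a monotone map `g` from the cube `Bool⁴` to `D_n` with `g wᶜ = (g w)*`. Such a map is
determined by its values `a, b, c` at `0011, 0101, 0110`, `z₁, …, z₄` at the vertices of weight
three and `h` at `1111`. Since `*` is antitone, monotonicity of `g` only has to be checked on the
cube edges ending in a vertex of weight at least three, and these say exactly that each `zᵢ` lies
in `[x, h]`, where `x` is the join of the values of `g` at the three neighbours of weight two.
-/

theorem monotone_of_le_update {ι α : Type*} [Fintype ι] [DecidableEq ι] [Preorder α]
    {f : (ι → Bool) → α} (hf : ∀ w i, f w ≤ f (Function.update w i true)) : Monotone f := by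
  classical
  have : LocallyFiniteOrder (ι → Bool) := Fintype.toLocallyFiniteOrder
  refine (monotone_iff_forall_covBy f).2 fun w w' hw => ?_
  obtain ⟨i, hi, hj⟩ := Pi.covBy_iff.1 hw
  convert hf w i
  funext j
  by_cases hji : j = i
  · subst hji
    rw [Bool.covBy_iff, Bool.lt_iff] at hi
    simp [hi.2]
  · simp [hji, hj j hji]

variable {m k n : ℕ}

theorem dual_apply (f : BF n) (v : Fin n → Bool) : dual f v = !f vᶜ := rfl

theorem dual_dual (f : BF n) : dual (dual f) = f := by
  funext v; simp [dual_apply]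

theorem dual_le_dual {f g : BF n} (h : f ≤ g) : dual g ≤ dual f :=
  fun v => compl_le_compl (h vᶜ)

theorem dual_le_of_dual_le {f g : BF n} (h : dual g ≤ f) : dual f ≤ g :=
  dual_dual g ▸ dual_le_dual h

theorem monotone_dual {f : BF n} (hf : Monotone f) : Monotone (dual f) :=
  fun _ _ h => compl_le_compl (hf (compl_le_compl h))

theorem Fin.append_le_append {α : Type*} [Preorder α] {v v' : Fin m → α} {w w' : Fin k → α}
    (hv : v ≤ v') (hw : w ≤ w') : Fin.append v w ≤ Fin.append v' w' :=
  fun i => Fin.addCases (fun i => by simpa using hv i) (fun i => by simpa using hw i) i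

theorem Fin.compl_append {α : Type*} [Compl α] (v : Fin m → α) (w : Fin k → α) :
    (Fin.append v w)ᶜ = Fin.append vᶜ wᶜ := by
  funext i; refine Fin.addCases (fun i => ?_) (fun i => ?_) i <;> simp

def splitLast (m k : ℕ) : BF (m + k) ≃ ((Fin k → Bool) → BF m) where
  toFun f w v := f (Fin.append v w)
  invFun g u := g (fun i => u (Fin.natAdd m i)) (fun i => u (Fin.castAdd k i))
  left_inv f := by funext u; simp [Fin.append_castAdd_natAdd]
  right_inv g := by funext w v; simp

theorem splitLast_apply (f : BF (m + k)) (w : Fin k → Bool) (v : Fin m → Bool) :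
    splitLast m k f w v = f (Fin.append v w) := rfl

theorem monotone_iff_splitLast {f : BF (m + k)} :
    Monotone f ↔ (∀ w, Monotone (splitLast m k f w)) ∧ Monotone (splitLast m k f) := by
  refine ⟨fun hf => ⟨fun w v v' h => hf (Fin.append_le_append h le_rfl),
    fun w w' h v => hf (Fin.append_le_append le_rfl h)⟩, fun ⟨hv, hw⟩ u u' h => ?_⟩
  rw [← (splitLast m k).symm_apply_apply f]
  exact (hw (fun i => h _) _).trans (hv _ fun i => h _)

theorem selfDual_iff_splitLast {f : BF (m + k)} :
    SelfDual f ↔ ∀ w, splitLast m k f wᶜ = dual (splitLast m k f w) := by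
  refine ⟨fun hf w => funext fun v => ?_, fun h => funext fun u => ?_⟩
  · conv_lhs => rw [splitLast_apply, hf]
    simp [dual_apply, splitLast_apply, Fin.compl_append]
  · obtain ⟨⟨v, w⟩, rfl⟩ := (Fin.appendEquiv m k).surjective u
    change f (Fin.append v w) = dual f (Fin.append v w)
    simpa [splitLast_apply, dual_apply, Fin.compl_append] using congrFun (h wᶜ) v

open Classical in
noncomputable def selfDualFamilies (m k : ℕ) : Finset ((Fin k → Bool) → BF m) :=
  Finset.univ.filter fun g => (∀ w, Monotone (g w)) ∧ Monotone g ∧ ∀ w, g wᶜ = dual (g w)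

theorem mem_selfDualFamilies {g : (Fin k → Bool) → BF m} :
    g ∈ selfDualFamilies m k ↔
      (∀ w, Monotone (g w)) ∧ Monotone g ∧ ∀ w, g wᶜ = dual (g w) := by
  simp [selfDualFamilies]

theorem lambda_add_eq_card_selfDualFamilies (m k : ℕ) :
    lambda (m + k) = (selfDualFamilies m k).card := by
  classical
  refine Finset.card_equiv (splitLast m k) fun f => ?_
  simp [mem_selfDualFamilies, monotone_iff_splitLast, selfDual_iff_splitLast, and_assoc]

abbrev Skeleton (n : ℕ) :=
  Σ _ : BF n, Σ _ : BF n, Σ _ : BF n, Σ _ : BF n, BF n × BF n × BF n × BF n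

open Classical in
noncomputable def admissible (n : ℕ) : Finset (Skeleton n) :=
  (Dset n).sigma fun a => (Dset n).sigma fun b => (Dset n).sigma fun c =>
    ((Dset n).filter fun h => a ⊔ b ⊔ c ⊔ dual a ⊔ dual b ⊔ dual c ≤ h).sigma fun h =>
      (Finset.univ.filter fun z : BF n => Monotone z ∧ a ⊔ b ⊔ c ≤ z ∧ z ≤ h) ×ˢ
      ((Finset.univ.filter fun z : BF n => Monotone z ∧ a ⊔ dual b ⊔ dual c ≤ z ∧ z ≤ h) ×ˢ
      ((Finset.univ.filter fun z : BF n => Monotone z ∧ b ⊔ dual a ⊔ dual c ≤ z ∧ z ≤ h) ×ˢ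
      (Finset.univ.filter fun z : BF n => Monotone z ∧ c ⊔ dual a ⊔ dual b ≤ z ∧ z ≤ h)))

open Classical in
theorem card_admissible (n : ℕ) :
    (admissible n).card =
      ∑ a ∈ Dset n, ∑ b ∈ Dset n, ∑ c ∈ Dset n,
        ∑ h ∈ (Dset n).filter
            (fun h => a ⊔ b ⊔ c ⊔ dual a ⊔ dual b ⊔ dual c ≤ h),
          re (a ⊔ b ⊔ c) h * re (a ⊔ dual b ⊔ dual c) h *
            re (b ⊔ dual a ⊔ dual c) h * re (c ⊔ dual a ⊔ dual b) h := by
  simp only [admissible, Finset.card_sigma, Finset.card_product, re, mul_assoc]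

def skeleton (g : (Fin 4 → Bool) → BF n) : Skeleton n :=
  ⟨g ![false, false, true, true], g ![false, true, false, true], g ![false, true, true, false],
    g ![true, true, true, true], g ![false, true, true, true], g ![true, false, true, true],
    g ![true, true, false, true], g ![true, true, true, false]⟩

def ofSkeleton : Skeleton n → (Fin 4 → Bool) → BF n
  | ⟨a, b, c, h, z₁, z₂, z₃, z₄⟩, w =>
    match w 0, w 1, w 2, w 3 with
    | false, false, false, false => dual h
    | true,  false, false, false => dual z₁
    | false, true,  false, false => dual z₂
    | false, false, true,  false => dual z₃
    | false, false, false, true  => dual z₄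
    | false, false, true,  true  => a
    | false, true,  false, true  => b
    | false, true,  true,  false => c
    | true,  true,  false, false => dual a
    | true,  false, true,  false => dual b
    | true,  false, false, true  => dual c
    | false, true,  true,  true  => z₁
    | true,  false, true,  true  => z₂
    | true,  true,  false, true  => z₃
    | true,  true,  true,  false => z₄
    | true,  true,  true,  true  => h

theorem skeleton_ofSkeleton (x : Skeleton n) : skeleton (ofSkeleton x) = x := rfl

theorem ofSkeleton_compl (x : Skeleton n) (w : Fin 4 → Bool) :
    ofSkeleton x wᶜ = dual (ofSkeleton x w) := by
  revert w
  simp only [Fin.forall_fin_succ_pi, Fin.forall_fin_zero_pi]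
  intro b₀ b₁ b₂ b₃
  cases b₀ <;> cases b₁ <;> cases b₂ <;> cases b₃ <;> first | rfl | exact (dual_dual _).symm

theorem ofSkeleton_skeleton {g : (Fin 4 → Bool) → BF n} (hg : ∀ w, g wᶜ = dual (g w)) :
    ofSkeleton (skeleton g) = g := by
  funext w
  revert w
  simp only [Fin.forall_fin_succ_pi, Fin.forall_fin_zero_pi]
  intro b₀ b₁ b₂ b₃
  cases b₀ <;> cases b₁ <;> cases b₂ <;> cases b₃ <;>
    first | rfl | exact (hg _).symm.trans (congrArg g (by decide))

theorem skeleton_mem_admissible {g : (Fin 4 → Bool) → BF n} (hg₀ : ∀ w, Monotone (g w))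
    (hg : Monotone g) (hsd : ∀ w, g wᶜ = dual (g w)) : skeleton g ∈ admissible n := by
  simp only [admissible, skeleton, Dset, Finset.mem_sigma, Finset.mem_product,
    Finset.mem_filter, Finset.mem_univ, true_and, sup_le_iff, ← hsd]
  and_intros <;> first | exact hg₀ _ | exact hg (Pi.le_def.2 (by decide))

theorem monotone_ofSkeleton {x : Skeleton n} (hx : x ∈ admissible n) :
    (∀ w, Monotone (ofSkeleton x w)) ∧ Monotone (ofSkeleton x) := by
  obtain ⟨a, b, c, h, z₁, z₂, z₃, z₄⟩ := x
  simp only [admissible, Dset, Finset.mem_sigma, Finset.mem_product,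
    Finset.mem_filter, Finset.mem_univ, true_and, sup_le_iff] at hx
  obtain ⟨ma, mb, mc, ⟨mh, -⟩, ⟨m₁, ⟨⟨ha₁, hb₁⟩, hc₁⟩, h₁⟩, ⟨m₂, ⟨⟨ha₂, hb₂⟩, hc₂⟩, h₂⟩,
    ⟨m₃, ⟨⟨hb₃, ha₃⟩, hc₃⟩, h₃⟩, ⟨m₄, ⟨⟨hc₄, ha₄⟩, hb₄⟩, h₄⟩⟩ := hx
  constructor
  · simp only [Fin.forall_fin_succ_pi, Fin.forall_fin_zero_pi]
    intro b₀ b₁ b₂ b₃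
    cases b₀ <;> cases b₁ <;> cases b₂ <;> cases b₃ <;>
      first | assumption | exact monotone_dual ‹_›
  · refine monotone_of_le_update fun w i => ?_
    revert w
    simp only [Fin.forall_fin_succ_pi, Fin.forall_fin_zero_pi]
    intro b₀ b₁ b₂ b₃
    fin_cases i <;> cases b₀ <;> cases b₁ <;> cases b₂ <;> cases b₃ <;>
      first | exact le_rfl | assumption | exact dual_le_dual ‹_› | exact dual_le_of_dual_le ‹_›

theorem card_selfDualFamilies_four (n : ℕ) :
    (selfDualFamilies n 4).card = (admissible n).card := by
  refine Finset.card_nbij' skeleton ofSkeleton (fun g hg => ?_) (fun x hx => ?_)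
    (fun g hg => ?_) (fun x _ => skeleton_ofSkeleton x)
  · obtain ⟨hg₀, hg, hsd⟩ := mem_selfDualFamilies.1 hg
    exact skeleton_mem_admissible hg₀ hg hsd
  · obtain ⟨hx₀, hx⟩ := monotone_ofSkeleton hx
    exact mem_selfDualFamilies.2 ⟨hx₀, hx, ofSkeleton_compl x⟩
  · exact ofSkeleton_skeleton (mem_selfDualFamilies.1 hg).2.2

open Classical in
theorem stmt_16 (n : ℕ) :
    lambda (n + 4) =
      ∑ a ∈ Dset n, ∑ b ∈ Dset n, ∑ c ∈ Dset n,
        ∑ h ∈ (Dset n).filter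
            (fun h => a ⊔ b ⊔ c ⊔ dual a ⊔ dual b ⊔ dual c ≤ h),
          re (a ⊔ b ⊔ c) h * re (a ⊔ dual b ⊔ dual c) h *
            re (b ⊔ dual a ⊔ dual c) h * re (c ⊔ dual a ⊔ dual b) h := by
  rw [lambda_add_eq_card_selfDualFamilies, card_selfDualFamilies_four, card_admissible]
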